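/- arXiv:2309.11722 — 3 statements merged into one kernel-verified Lean document; each statement's English description precedes it below -/
import Mathlib

section
/- Let w : 2^N → ℝ be a characteristic function with w(∅)=0 and define the VCG surplus πᵢ^{VCG} = w(N) − w(N\{i}) for each i ∈ N, and π₀^{VCG} = w(N) − Σ_{i∈N} πᵢ^{VCG}. Define α(S) = max_{T ⊇ S} max_{i ∈ S} [ (w(N) − w(N\{i})) − (w(T) − w(T\{i})) ]. If ε ≥ 0 satisfies ε ≥ max_{S ⊆ N, S ≠ ∅} α(S)·(|N| − |S|), then for every coalition S ⊆ N, Σ_{i∈S} πᵢ^{VCG} + π₀^{VCG} ≥ w(S) − ε; that is, the VCG surplus vector satisfies all strong ε-core coalition constraints. -/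
/-- If ε ≥ 0 satisfies ε ≥ max_{S ≠ ∅} α(S)·(|N| − |S|), where
α(S) = max_{T ⊇ S} max_{i ∈ S} [(w(N) − w(N\{i})) − (w(T) − w(T\{i}))],
then the VCG surplus vector satisfies all strong ε-core coalition constraints. -/
theorem stmt1 (n : ℕ) (w : Finset (Fin n) → ℝ) (h0 : w ∅ = 0)
    (ε : ℝ) (hε : 0 ≤ ε)
    (πVCG : Fin n → ℝ)
    (hπVCG : ∀ i, πVCG i = w Finset.univ - w (Finset.univ.erase i))
    (π₀VCG : ℝ)
    (hπ₀ : π₀VCG = w Finset.univ - ∑ i, πVCG i)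
    (hbound : ∀ S : Finset (Fin n), S.Nonempty →
      ∀ T : Finset (Fin n), S ⊆ T → ∀ i ∈ S,
        ((w Finset.univ - w (Finset.univ.erase i)) - (w T - w (T.erase i))) *
          (((Finset.univ : Finset (Fin n)).card : ℝ) - (S.card : ℝ)) ≤ ε) :
    ∀ S : Finset (Fin n), (∑ i ∈ S, πVCG i) + π₀VCG ≥ w S - ε := by
  intro S
  set g : Finset (Fin n) → ℝ := fun T =>
    w T - w Finset.univ + ∑ i ∈ Finset.univ \ T,
      (w Finset.univ - w (Finset.univ.erase i)) with hg
  -- complement of card 1 gives g = 0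
  have hone : ∀ T : Finset (Fin n), (Finset.univ \ T).card = 1 → g T = 0 := by
    intro T hT
    obtain ⟨i, hi⟩ := Finset.card_eq_one.mp hT
    have hTeq : T = Finset.univ.erase i := by
      have h2 : Finset.univ \ (Finset.univ \ T) = T :=
        Finset.sdiff_sdiff_eq_self (Finset.subset_univ T)
      rw [← h2, hi, Finset.sdiff_singleton_eq_erase]
    simp only [hg]
    rw [hi, Finset.sum_singleton, hTeq]
    ring
  have key : ∀ m : ℕ, ∀ T : Finset (Fin n), S ⊆ T → (Finset.univ \ T).card = m + 1 →
      g T * ((n : ℝ) - S.card - 1) ≤ (m : ℝ) * ε := by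
    intro m
    induction m with
    | zero =>
      intro T hST hT
      simp [hone T hT]
    | succ m ih =>
      intro T hST hT
      have hne : (Finset.univ \ T).Nonempty := by
        rw [← Finset.card_pos, hT]; omega
      obtain ⟨i, hi⟩ := hne
      have hiT : i ∉ T := (Finset.mem_sdiff.mp hi).2
      have hiS : i ∉ S := fun h => hiT (hST h)
      have hT' : (Finset.univ \ insert i T).card = m + 1 := by
        rw [Finset.sdiff_insert, Finset.card_erase_of_mem hi, hT]
        omega
      have hST' : S ⊆ insert i T := hST.trans (Finset.subset_insert i T)
      have ihT := ih (insert i T) hST' hT'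
      -- decompose g T = g (insert i T) + term
      have hsum : ∑ j ∈ Finset.univ \ T, (w Finset.univ - w (Finset.univ.erase j))
          = (w Finset.univ - w (Finset.univ.erase i))
            + ∑ j ∈ Finset.univ \ insert i T, (w Finset.univ - w (Finset.univ.erase j)) := by
        rw [Finset.sdiff_insert, ← Finset.add_sum_erase _ _ hi]
      have herase : (insert i T).erase i = T := Finset.erase_insert hiT
      have hterm := hbound (insert i S) ⟨i, Finset.mem_insert_self i S⟩ (insert i T)
        (Finset.insert_subset_insert i hST) i (Finset.mem_insert_self i S)
      rw [herase] at hterm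
      have hcard : ((insert i S).card : ℝ) = (S.card : ℝ) + 1 := by
        rw [Finset.card_insert_of_notMem hiS]; push_cast; ring
      have hcu : (((Finset.univ : Finset (Fin n)).card : ℝ)) = (n : ℝ) := by
        simp
      rw [hcard, hcu] at hterm
      have hgdec : g T = g (insert i T)
          + ((w Finset.univ - w (Finset.univ.erase i)) - (w (insert i T) - w T)) := by
        simp only [hg]
        rw [hsum]; ring
      rw [hgdec]
      push_cast
      nlinarith [hterm]
  -- final assembly
  have hSsub : S ⊆ Finset.univ := Finset.subset_univ S
  have hgoal : g S ≤ ε := by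
    rcases Nat.eq_zero_or_pos (Finset.univ \ S).card with h | h
    · -- S = univ
      have : Finset.univ \ S = ∅ := Finset.card_eq_zero.mp h
      have hSeq : S = Finset.univ := by
        have := Finset.sdiff_eq_empty_iff_subset.mp this
        exact Finset.eq_univ_iff_forall.mpr fun x => this (Finset.mem_univ x)
      simp [hg, hSeq, hε]
    · obtain ⟨m, hm⟩ : ∃ m, (Finset.univ \ S).card = m + 1 :=
        ⟨(Finset.univ \ S).card - 1, by omega⟩
      have hcardS : S.card + (m + 1) = n := by
        have := Finset.card_sdiff_add_card_eq_card hSsub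
        simp only [Finset.card_univ, Fintype.card_fin] at this
        omega
      have hc : (n : ℝ) - S.card - 1 = (m : ℝ) := by
        have : (n : ℝ) = (S.card : ℝ) + (m : ℝ) + 1 := by
          push_cast [← hcardS]; ring
        linarith
      have := key m S (le_refl _) hm
      rw [hc] at this
      rcases Nat.eq_zero_or_pos m with hm0 | hm0
      · subst hm0
        rw [hone S hm]
        exact hε
      · have hmr : (0 : ℝ) < m := by exact_mod_cast hm0
        nlinarith
  -- translate goal
  have hsplit : ∑ i ∈ Finset.univ \ S, πVCG i + ∑ i ∈ S, πVCG i = ∑ i, πVCG i :=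
    Finset.sum_sdiff hSsub
  have hπsum : ∑ i ∈ Finset.univ \ S, πVCG i
      = ∑ i ∈ Finset.univ \ S, (w Finset.univ - w (Finset.univ.erase i)) :=
    Finset.sum_congr rfl fun i _ => hπVCG i
  simp only [hg] at hgoal
  rw [ge_iff_le, hπ₀]
  rw [← hsplit, hπsum] at *
  linarith
end

section
/- Fix a distribution P over nonempty coalitions of N = {1,...,n} and δ, Δ ∈ (0,1). Encode each coalition S as the vector z^S = (χ_S, −w(S), 1, 1) ∈ ℝ^{n+3} where χ_S ∈ {0,1}^n is the indicator of S. Consider the function class F = { z ↦ sign(w·z) : w = (π, 1, π₀, ε), π ∈ ℝ₊^n, π₀ ≥ 0, Σᵢ πᵢ + π₀ = w(N) }. If (π̂, π̂₀, ε̂) is any feasible solution of the quadratic program over m = O((n + log(1/Δ))/δ²) coalitions S₁,...,S_m sampled i.i.d. from P (so that Σ_{i∈S_k} π̂ᵢ + π̂₀ + ε̂ ≥ w(S_k) for all k), then with probability at least 1 − Δ, Pr_{S~P}[ Σ_{i∈S} π̂ᵢ + π̂₀ + ε̂ − w(S) ≥ 0 ] ≥ 1 − δ; i.e., the solution is in the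 δ-probable core. -/
open scoped Classical

/-!
A coalition `S` satisfies the `ε`-core constraint of `(π, π₀, ε)` iff the linear form
`(π, c, t) ↦ ∑_{i ∈ S} πᵢ + c - t w(S)` is nonnegative at `(π, π₀ + ε, 1)`. These forms range over
an `(n + 2)`-dimensional space, so no `n + 3` coalitions are shattered (Dudley), and by
Sauer–Shelah the constraints cut at most `∑_{k ≤ n+2} C(2m, k)` patterns out of `2m` coalitions.
The rest is the realizable-case Vapnik–Chervonenkis argument. If some `θ` satisfies all sampled
constraints but fails on mass `> δ`, then by Chebyshev it fails, with probability `≥ 1/2`, on at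
least `δm/2` points of an independent ghost sample. Given the `2m` points, a random swap of sample
and ghost points sends all these failures to the ghost half with probability `≤ 2^{-δm/2}` per
pattern. Hence the failure probability is at most `2 ∑_{k ≤ n+2} C(2m, k) 2^{-δm/2}`, which is
`≤ Δ` once `m ≥ 1000 (n + log(1/Δ)) / δ²`.
-/

open Finset

noncomputable section

namespace ProbableCore

section PiWeight

variable {ι Ω : Type*} [Fintype ι] (P : Ω → ℝ)

def piWeight (f : ι → Ω) : ℝ := ∏ k, P (f k)

variable {P}

lemma piWeight_nonneg (hP : ∀ x, 0 ≤ P x) (f : ι → Ω) : 0 ≤ piWeight P f :=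
  prod_nonneg fun k _ ↦ hP (f k)

variable [DecidableEq ι] [Fintype Ω]

lemma sum_piWeight_mul_prod (g : ι → Ω → ℝ) :
    ∑ f : ι → Ω, piWeight P f * ∏ k, g k (f k) = ∏ k, ∑ x, P x * g k x := by
  rw [Fintype.prod_sum]
  simp only [piWeight, prod_mul_distrib]

lemma sum_piWeight (hP1 : ∑ x, P x = 1) : ∑ f : ι → Ω, piWeight P f = 1 := by
  simpa [hP1] using sum_piWeight_mul_prod (P := P) (ι := ι) fun _ _ ↦ 1

lemma sum_piWeight_mul_apply (hP1 : ∑ x, P x = 1) (a : ι) (φ : Ω → ℝ) :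
    ∑ f : ι → Ω, piWeight P f * φ (f a) = ∑ x, P x * φ x := by
  have h := sum_piWeight_mul_prod (P := P) fun k x ↦ if k = a then φ x else 1
  have hk : ∀ k, ∑ x, P x * (if k = a then φ x else 1) = if k = a then ∑ x, P x * φ x else 1 := by
    intro k
    by_cases hka : k = a <;> simp_all
  simpa only [Fintype.prod_ite_eq', hk] using h

lemma sum_piWeight_mul_apply_mul_apply (hP1 : ∑ x, P x = 1) {a b : ι} (hab : a ≠ b)
    (φ ψ : Ω → ℝ) :
    ∑ f : ι → Ω, piWeight P f * (φ (f a) * ψ (f b)) = (∑ x, P x * φ x) * ∑ x, P x * ψ x := by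
  have h := sum_piWeight_mul_prod (P := P)
    fun k x ↦ (if k = a then φ x else 1) * (if k = b then ψ x else 1)
  have hk : ∀ k, ∑ x, P x * ((if k = a then φ x else 1) * (if k = b then ψ x else 1)) =
      (if k = a then ∑ x, P x * φ x else 1) * (if k = b then ∑ x, P x * ψ x else 1) := by
    intro k
    by_cases hka : k = a <;> by_cases hkb : k = b <;> simp_all
  simpa only [prod_mul_distrib, Fintype.prod_ite_eq', hk] using h

lemma sum_piWeight_mul_sq_sum (hP1 : ∑ x, P x = 1) (ψ : Ω → ℝ)
    (hψ : ∑ x, P x * ψ x = 0) :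
    ∑ f : ι → Ω, piWeight P f * (∑ k, ψ (f k)) ^ 2 = Fintype.card ι * ∑ x, P x * ψ x ^ 2 := by
  have hkl : ∀ k l : ι, ∑ f : ι → Ω, piWeight P f * (ψ (f k) * ψ (f l)) =
      if k = l then ∑ x, P x * ψ x ^ 2 else 0 := by
    intro k l
    split_ifs with h
    · subst h
      simpa only [← sq] using sum_piWeight_mul_apply hP1 k (ψ · ^ 2)
    · rw [sum_piWeight_mul_apply_mul_apply hP1 h, hψ, zero_mul]
  calc ∑ f : ι → Ω, piWeight P f * (∑ k, ψ (f k)) ^ 2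
      = ∑ k, ∑ l, ∑ f : ι → Ω, piWeight P f * (ψ (f k) * ψ (f l)) := by
        simp_rw [sq, sum_mul_sum, mul_sum]
        rw [sum_comm]
        exact sum_congr rfl fun k _ ↦ sum_comm
    _ = Fintype.card ι * ∑ x, P x * ψ x ^ 2 := by
        simp only [hkl, sum_ite_eq, mem_univ, if_true, sum_const, card_univ, nsmul_eq_mul]

end PiWeight

section Chebyshev

lemma mul_sum_filter_le_sum_mul {α : Type*} [Fintype α] {W Y : α → ℝ} (hW : ∀ x, 0 ≤ W x)
    (hY : ∀ x, 0 ≤ Y x) (p : α → Prop) [DecidablePred p] {a : ℝ} (hpY : ∀ x, p x → a ≤ Y x) :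
    a * ∑ x with p x, W x ≤ ∑ x, W x * Y x :=
  calc a * ∑ x with p x, W x
      ≤ ∑ x with p x, W x * Y x := by
        rw [mul_sum]
        exact sum_le_sum fun x hx ↦ by
          rw [mul_comm]
          exact mul_le_mul_of_nonneg_left (hpY x (mem_filter.mp hx).2) (hW x)
    _ ≤ ∑ x, W x * Y x :=
        sum_le_sum_of_subset_of_nonneg (subset_univ _) fun x _ _ ↦ mul_nonneg (hW x) (hY x)

variable {ι Ω : Type*} [Fintype ι] [DecidableEq ι] [Fintype Ω] {P : Ω → ℝ}

lemma sum_piWeight_mul_card_filter_sub_sq_le (hP1 : ∑ x, P x = 1) (B : Ω → Prop)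
    [DecidablePred B] :
    ∑ f : ι → Ω, piWeight P f *
        ((#{k | B (f k)} : ℝ) - Fintype.card ι * ∑ x with B x, P x) ^ 2 ≤
      Fintype.card ι * ∑ x with B x, P x := by
  set q := ∑ x with B x, P x
  set ψ : Ω → ℝ := fun x ↦ (if B x then 1 else 0) - q
  have hψ : ∑ x, P x * ψ x = 0 := by
    have hPψ : ∀ x, P x * ψ x = (if B x then P x else 0) - q * P x := fun x ↦ by
      simp only [ψ, mul_sub, mul_ite, mul_one, mul_zero, mul_comm]
    simp only [hPψ, sum_sub_distrib, ← sum_filter, ← mul_sum, hP1]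
    ring
  have hψ2 : ∑ x, P x * ψ x ^ 2 ≤ q := by
    have hsq : ∀ x, P x * ψ x ^ 2 = (1 - 2 * q) * (if B x then P x else 0) + q ^ 2 * P x :=
      fun x ↦ by by_cases hB : B x <;> simp only [ψ, hB, if_true, if_false] <;> ring
    simp only [hsq, sum_add_distrib, ← mul_sum, ← sum_filter, hP1]
    nlinarith
  have hcount : ∀ f : ι → Ω, ∑ k, ψ (f k) = #{k | B (f k)} - Fintype.card ι * q := fun f ↦ by
    simp only [ψ, sum_sub_distrib, natCast_card_filter, sum_const, card_univ, nsmul_eq_mul]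
  simp only [← hcount, sum_piWeight_mul_sq_sum hP1 ψ hψ]
  exact mul_le_mul_of_nonneg_left hψ2 (Nat.cast_nonneg _)

lemma half_le_sum_piWeight_filter_le_card (hP : ∀ x, 0 ≤ P x) (hP1 : ∑ x, P x = 1)
    (B : Ω → Prop) [DecidablePred B] {r : ℕ}
    (h8 : 8 ≤ (∑ x with B x, P x) * Fintype.card ι)
    (hr : (r : ℝ) ≤ (∑ x with B x, P x) * Fintype.card ι / 2 + 1) :
    1 / 2 ≤ ∑ f : ι → Ω with r ≤ #{k | B (f k)}, piWeight P f := by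
  set q := ∑ x with B x, P x
  set m : ℝ := (Fintype.card ι : ℝ)
  have hfew : ∀ f : ι → Ω, ¬ r ≤ #{k | B (f k)} →
      (m * q / 2) ^ 2 ≤ ((#{k | B (f k)} : ℝ) - m * q) ^ 2 := by
    intro f hf
    have : (#{k | B (f k)} : ℝ) + 1 ≤ r := by exact_mod_cast Nat.lt_of_not_le hf
    nlinarith
  set s := ∑ f : ι → Ω with ¬ r ≤ #{k | B (f k)}, piWeight P f
  have hmarkov : (m * q / 2) ^ 2 * s ≤ m * q :=
    (mul_sum_filter_le_sum_mul (piWeight_nonneg hP) (fun _ ↦ sq_nonneg _) _ hfew).trans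
      (sum_piWeight_mul_card_filter_sub_sq_le hP1 B)
  have hs : m * q * s ≤ 4 := by
    have hmq : 0 < m * q := by linarith
    have : m * q * (m * q * s) ≤ m * q * 4 := by nlinarith
    exact le_of_mul_le_mul_left this hmq
  have hs0 : 0 ≤ s := sum_nonneg fun f _ ↦ piWeight_nonneg hP f
  have htotal := sum_filter_add_sum_filter_not univ (fun f : ι → Ω ↦ r ≤ #{k | B (f k)})
    (piWeight P)
  rw [sum_piWeight hP1] at htotal
  nlinarith

end Chebyshev

section Swap

variable {Ω : Type*} {m : ℕ}

def swapIndex (σ : Fin m → Bool) (k : Fin m) : Fin m ⊕ Fin m :=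
  if σ k then .inr k else .inl k

def swapAt (σ : Fin m → Bool) (p : (Fin m → Ω) × (Fin m → Ω)) : (Fin m → Ω) × (Fin m → Ω) :=
  (fun k ↦ Sum.elim p.1 p.2 (swapIndex σ k), fun k ↦ Sum.elim p.1 p.2 (swapIndex σ k).swap)

lemma swapAt_involutive (σ : Fin m → Bool) : Function.Involutive (swapAt (Ω := Ω) σ) := by
  intro p
  ext k <;> cases h : σ k <;> simp [swapAt, swapIndex, h]

lemma card_filter_eqOn_le {ι β : Type*} [Fintype ι] [DecidableEq ι] [Fintype β] [DecidableEq β]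
    (M : Finset ι) (τ : ι → β) :
    #{σ : ι → β | ∀ k ∈ M, σ k = τ k} ≤ Fintype.card β ^ (Fintype.card ι - #M) := by
  have hinj : Set.InjOn (fun (σ : ι → β) (k : ↥Mᶜ) ↦ σ k)
      (univ.filter fun σ : ι → β ↦ ∀ k ∈ M, σ k = τ k : Finset (ι → β)) := by
    intro σ hσ σ' hσ' h
    funext k
    by_cases hk : k ∈ M
    · rw [(mem_filter.mp (mem_coe.mp hσ)).2 k hk, (mem_filter.mp (mem_coe.mp hσ')).2 k hk]
    · exact congrFun h ⟨k, mem_compl.mpr hk⟩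
  simpa using card_le_card_of_injOn _ (fun σ _ ↦ mem_coe.mpr (mem_univ _)) hinj

def SwapFits (V : Finset (Fin m ⊕ Fin m)) (r : ℕ) (σ : Fin m → Bool) : Prop :=
  (∀ k, swapIndex σ k ∈ V) ∧ r ≤ #{k | (swapIndex σ k).swap ∉ V}

lemma card_filter_swapFits_le (V : Finset (Fin m ⊕ Fin m)) (r : ℕ) :
    (#{σ : Fin m → Bool | SwapFits V r σ} : ℝ) ≤ 2 ^ m / 2 ^ r := by
  set M : Finset (Fin m) := {k | ¬ (Sum.inl k ∈ V ↔ Sum.inr k ∈ V)}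
  -- on `M`, exactly one of the two copies of `k` is accepted, which fixes `σ k`
  have hforced : ∀ σ : Fin m → Bool, (∀ k, swapIndex σ k ∈ V) →
      ∀ k ∈ M, σ k = decide (Sum.inr k ∈ V) := by
    intro σ hσ k hk
    have := hσ k
    simp only [M, mem_filter, mem_univ, true_and] at hk
    cases h : σ k <;> simp_all [swapIndex]
  have herr : ∀ σ : Fin m → Bool, (∀ k, swapIndex σ k ∈ V) →
      univ.filter (fun k ↦ (swapIndex σ k).swap ∉ V) ⊆ M := by
    intro σ hσ k hk
    have := hσ k
    simp only [M, mem_filter, mem_univ, true_and] at hk ⊢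
    cases h : σ k <;> simp_all [swapIndex]
  rcases eq_empty_or_nonempty {σ : Fin m → Bool | SwapFits V r σ} with h | ⟨σ₀, hσ₀⟩
  · rw [h, card_empty, Nat.cast_zero]
    positivity
  have hσ₀ := (mem_filter.mp hσ₀).2
  have hrM : r ≤ #M := hσ₀.2.trans (card_le_card (herr σ₀ hσ₀.1))
  have hcard := card_filter_eqOn_le M fun k ↦ decide (Sum.inr k ∈ V)
  rw [Fintype.card_bool, Fintype.card_fin] at hcard
  calc (#{σ : Fin m → Bool | SwapFits V r σ} : ℝ)
      ≤ #{σ : Fin m → Bool | ∀ k ∈ M, σ k = decide (Sum.inr k ∈ V)} := by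
        gcongr with σ
        exact fun hσ ↦ hforced σ hσ.1
    _ ≤ 2 ^ (m - #M) := by exact_mod_cast by convert hcard
    _ = 2 ^ m / 2 ^ #M := pow_sub₀ _ two_ne_zero (card_le_univ M |>.trans_eq (Fintype.card_fin m))
    _ ≤ 2 ^ m / 2 ^ r := by gcongr; norm_num

end Swap

section Learning

variable {Θ Ω : Type*} (sat : Θ → Ω → Prop) {m : ℕ}

def traces {ι : Type*} [Fintype ι] (q : ι → Ω) : Finset (Finset ι) :=
  univ.filter fun u ↦ ∃ θ, ∀ j, j ∈ u ↔ sat θ (q j)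

def errorMass [Fintype Ω] (P : Ω → ℝ) (θ : Θ) : ℝ := ∑ x with ¬ sat θ x, P x

def IsBadSample [Fintype Ω] (P : Ω → ℝ) (δ : ℝ) (xs : Fin m → Ω) : Prop :=
  ∃ θ, (∀ k, sat θ (xs k)) ∧ δ < errorMass sat P θ

def IsBadDoubleSample (r : ℕ) (p : (Fin m → Ω) × (Fin m → Ω)) : Prop :=
  ∃ θ, (∀ k, sat θ (p.1 k)) ∧ r ≤ #{k | ¬ sat θ (p.2 k)}

variable {sat} {P : Ω → ℝ}

lemma card_filter_isBadDoubleSample_swapAt_le (r : ℕ) (p : (Fin m → Ω) × (Fin m → Ω)) :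
    (#{σ : Fin m → Bool | IsBadDoubleSample sat r (swapAt σ p)} : ℝ)
      ≤ #(traces sat (Sum.elim p.1 p.2)) * (2 ^ m / 2 ^ r) := by
  set q := Sum.elim p.1 p.2
  have hsub : univ.filter (fun σ : Fin m → Bool ↦ IsBadDoubleSample sat r (swapAt σ p)) ⊆
      (traces sat q).biUnion fun V ↦ univ.filter (SwapFits V r) := by
    intro σ hσ
    obtain ⟨θ, hcons, herr⟩ := (mem_filter.mp hσ).2
    simp only [mem_biUnion, traces, mem_filter, mem_univ, true_and]
    refine ⟨univ.filter fun j ↦ sat θ (q j), ⟨θ, by simp⟩, by simpa [swapAt, q] using hcons, ?_⟩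
    convert herr using 3
    simp [swapAt, q]
  calc (#{σ : Fin m → Bool | IsBadDoubleSample sat r (swapAt σ p)} : ℝ)
      ≤ ∑ V ∈ traces sat q, (#{σ : Fin m → Bool | SwapFits V r σ} : ℝ) := by
        exact_mod_cast (card_le_card hsub).trans card_biUnion_le
    _ ≤ #(traces sat q) * (2 ^ m / 2 ^ r) := by
        simpa using sum_le_sum fun V _ ↦ card_filter_swapFits_le V r

lemma piWeight_swapAt (σ : Fin m → Bool) (p : (Fin m → Ω) × (Fin m → Ω)) :
    piWeight P (swapAt σ p).1 * piWeight P (swapAt σ p).2 = piWeight P p.1 * piWeight P p.2 := by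
  simp only [piWeight, ← prod_mul_distrib]
  exact prod_congr rfl fun k _ ↦ by cases h : σ k <;> simp [swapAt, swapIndex, h, mul_comm]

variable [Fintype Ω]

lemma sum_filter_swapAt (σ : Fin m → Bool) (B : (Fin m → Ω) × (Fin m → Ω) → Prop) :
    ∑ p with B (swapAt σ p), piWeight P p.1 * piWeight P p.2 =
      ∑ p with B p, piWeight P p.1 * piWeight P p.2 := by
  rw [sum_filter, sum_filter]
  exact Fintype.sum_equiv (swapAt_involutive σ).toPerm _ _ fun p ↦ by
    simp only [Function.Involutive.coe_toPerm, piWeight_swapAt]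

lemma sum_filter_isBadDoubleSample_le (hP : ∀ x, 0 ≤ P x) (hP1 : ∑ x, P x = 1) {G : ℝ}
    (hG : ∀ q : Fin m ⊕ Fin m → Ω, (#(traces sat q) : ℝ) ≤ G) (r : ℕ) :
    ∑ p : (Fin m → Ω) × (Fin m → Ω) with IsBadDoubleSample sat r p,
      piWeight P p.1 * piWeight P p.2 ≤ G / 2 ^ r := by
  set w : (Fin m → Ω) × (Fin m → Ω) → ℝ := fun p ↦ piWeight P p.1 * piWeight P p.2
  have hw : ∀ p, 0 ≤ w p := fun p ↦ mul_nonneg (piWeight_nonneg hP _) (piWeight_nonneg hP _)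
  have hw1 : ∑ p, w p = 1 := by
    rw [Fintype.sum_prod_type]
    simp only [w, ← sum_mul_sum, sum_piWeight hP1, one_mul]
  -- averaging over all `2 ^ m` swaps, each of which preserves the product weight
  have havg : 2 ^ m * ∑ p with IsBadDoubleSample sat r p, w p =
      ∑ p, w p * #{σ : Fin m → Bool | IsBadDoubleSample sat r (swapAt σ p)} := by
    calc 2 ^ m * ∑ p with IsBadDoubleSample sat r p, w p
        = ∑ σ : Fin m → Bool, ∑ p with IsBadDoubleSample sat r p, w p := by
          simp [sum_const, card_univ]
      _ = ∑ σ : Fin m → Bool, ∑ p with IsBadDoubleSample sat r (swapAt σ p), w p := by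
          simp only [w, sum_filter_swapAt]
      _ = ∑ p, ∑ σ : Fin m → Bool with IsBadDoubleSample sat r (swapAt σ p), w p :=
          sum_comm' fun σ p ↦ by simp
      _ = ∑ p, w p * #{σ : Fin m → Bool | IsBadDoubleSample sat r (swapAt σ p)} := by
          simp [sum_const, mul_comm]
  have hcount : ∀ p, (#{σ : Fin m → Bool | IsBadDoubleSample sat r (swapAt σ p)} : ℝ)
      ≤ G * (2 ^ m / 2 ^ r) := fun p ↦
    (card_filter_isBadDoubleSample_swapAt_le r p).trans (by gcongr; exact hG _)
  have h2m : (0 : ℝ) < 2 ^ m := by positivity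
  have : 2 ^ m * ∑ p with IsBadDoubleSample sat r p, w p ≤ 2 ^ m * (G / 2 ^ r) :=
    calc 2 ^ m * ∑ p with IsBadDoubleSample sat r p, w p
        ≤ ∑ p, w p * (G * (2 ^ m / 2 ^ r)) := by
          rw [havg]; exact sum_le_sum fun p _ ↦ mul_le_mul_of_nonneg_left (hcount p) (hw p)
      _ = 2 ^ m * (G / 2 ^ r) := by rw [← sum_mul, hw1]; ring
  exact le_of_mul_le_mul_left this h2m

lemma sum_filter_isBadSample_le (hP : ∀ x, 0 ≤ P x) (hP1 : ∑ x, P x = 1) {δ : ℝ} {r : ℕ}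
    (h8 : 8 ≤ δ * m) (hr : (r : ℝ) ≤ δ * m / 2 + 1) :
    ∑ xs : Fin m → Ω with IsBadSample sat P δ xs, piWeight P xs ≤
      2 * ∑ p : (Fin m → Ω) × (Fin m → Ω) with IsBadDoubleSample sat r p,
        piWeight P p.1 * piWeight P p.2 := by
  have hghost : ∀ xs : Fin m → Ω, IsBadSample sat P δ xs →
      1 / 2 ≤ ∑ ys : Fin m → Ω with IsBadDoubleSample sat r (xs, ys), piWeight P ys := by
    rintro xs ⟨θ, hcons, herr⟩
    have hδm : δ * m ≤ (∑ x with ¬ sat θ x, P x) * m := by gcongr; exact herr.le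
    calc (1 : ℝ) / 2
        ≤ ∑ ys : Fin m → Ω with r ≤ #{k | ¬ sat θ (ys k)}, piWeight P ys :=
          half_le_sum_piWeight_filter_le_card hP hP1 (fun x ↦ ¬ sat θ x)
            (by rw [Fintype.card_fin]; exact h8.trans hδm)
            (by rw [Fintype.card_fin]; linarith)
      _ ≤ _ := by
          refine sum_le_sum_of_subset_of_nonneg (fun ys hys ↦ ?_) fun ys _ _ ↦ piWeight_nonneg hP ys
          simp only [mem_filter, mem_univ, true_and] at hys ⊢
          exact ⟨θ, hcons, hys⟩
  calc ∑ xs : Fin m → Ω with IsBadSample sat P δ xs, piWeight P xs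
      = 2 * ∑ xs : Fin m → Ω with IsBadSample sat P δ xs, piWeight P xs * (1 / 2) := by
        rw [← sum_mul]; ring
    _ ≤ 2 * ∑ xs : Fin m → Ω with IsBadSample sat P δ xs, piWeight P xs *
          ∑ ys with IsBadDoubleSample sat r (xs, ys), piWeight P ys := by
        gcongr with xs hxs
        · exact piWeight_nonneg hP xs
        · exact hghost xs (mem_filter.mp hxs).2
    _ ≤ 2 * ∑ xs, piWeight P xs *
          ∑ ys with IsBadDoubleSample sat r (xs, ys), piWeight P ys := by
        gcongr
        · exact fun xs _ _ ↦
            mul_nonneg (piWeight_nonneg hP xs) (sum_nonneg fun ys _ ↦ piWeight_nonneg hP ys)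
        · exact subset_univ _
    _ = 2 * ∑ p : (Fin m → Ω) × (Fin m → Ω) with IsBadDoubleSample sat r p,
        piWeight P p.1 * piWeight P p.2 := by
        simp only [sum_filter, mul_sum, mul_ite, mul_zero, ← Fintype.sum_prod_type']

theorem pac_guarantee (hP : ∀ x, 0 ≤ P x) (hP1 : ∑ x, P x = 1) {G : ℝ}
    (hG : ∀ q : Fin m ⊕ Fin m → Ω, (#(traces sat q) : ℝ) ≤ G) {δ : ℝ} {r : ℕ}
    (h8 : 8 ≤ δ * m) (hr : (r : ℝ) ≤ δ * m / 2 + 1) (learner : (Fin m → Ω) → Θ) :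
    1 - 2 * (G / 2 ^ r) ≤ ∑ xs : Fin m → Ω with
      ((∀ k, sat (learner xs) (xs k)) → 1 - δ ≤ ∑ x with sat (learner xs) x, P x),
      piWeight P xs := by
  have hsub : univ.filter (fun xs : Fin m → Ω ↦
        ¬ ((∀ k, sat (learner xs) (xs k)) → 1 - δ ≤ ∑ x with sat (learner xs) x, P x)) ⊆
      univ.filter (IsBadSample sat P δ) := by
    intro xs hxs
    simp only [mem_filter, mem_univ, true_and, Classical.not_imp, not_le] at hxs ⊢
    have hsplit := sum_filter_add_sum_filter_not univ (sat (learner xs)) P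
    rw [hP1] at hsplit
    exact ⟨learner xs, hxs.1, by unfold errorMass; linarith [hxs.2]⟩
  have hsplit := sum_filter_add_sum_filter_not univ
    (fun xs : Fin m → Ω ↦ (∀ k, sat (learner xs) (xs k)) → 1 - δ ≤ ∑ x with sat (learner xs) x, P x)
    (piWeight P)
  rw [sum_piWeight hP1] at hsplit
  have hbad := (sum_le_sum_of_subset_of_nonneg hsub fun xs _ _ ↦ piWeight_nonneg hP xs).trans
    ((sum_filter_isBadSample_le hP hP1 h8 hr).trans
      (mul_le_mul_of_nonneg_left (sum_filter_isBadDoubleSample_le hP hP1 hG r) zero_le_two))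
  linarith

end Learning

section VCDimension

variable {ι E : Type*} [AddCommGroup E] [Module ℝ E] [FiniteDimensional ℝ E]

lemma card_le_finrank_of_shatters (L : E →ₗ[ℝ] ι → ℝ) {𝒜 : Finset (Finset ι)}
    (h𝒜 : ∀ u ∈ 𝒜, ∃ θ, ∀ j, j ∈ u ↔ 0 ≤ L θ j) {s : Finset ι} (hs : 𝒜.Shatters s) :
    #s ≤ Module.finrank ℝ E := by
  by_contra hlt
  let v : ι → Module.Dual ℝ E := fun j ↦ (LinearMap.proj j).comp L
  have hv : ¬ LinearIndepOn ℝ v s := fun h ↦ by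
    have := h.fintype_card_le_finrank
    rw [Subspace.dual_finrank_eq] at this
    simp only [coe_sort_coe, Fintype.card_coe] at this
    omega
  obtain ⟨g, hg, j₀, hj₀, hgj₀⟩ :
      ∃ g : ι → ℝ, (∀ θ, ∑ j ∈ s, g j * L θ j = 0) ∧ ∃ j ∈ s, 0 < g j := by
    obtain ⟨g, hg, j, hj, hgj⟩ : ∃ g : ι → ℝ, ∑ i ∈ s, g i • v i = 0 ∧ ∃ j ∈ s, g j ≠ 0 := by
      simpa [linearIndepOn_finset_iff] using hv
    have hgθ : ∀ θ, ∑ j ∈ s, g j * L θ j = 0 := fun θ ↦ by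
      simpa [v] using congrArg (fun φ : Module.Dual ℝ E ↦ φ θ) hg
    rcases hgj.lt_or_gt with h | h
    · exact ⟨-g, fun θ ↦ by simp [neg_mul, sum_neg_distrib, hgθ], j, hj, by simpa using h⟩
    · exact ⟨g, hgθ, j, hj, h⟩
  -- shatter `s` along the sign pattern of `g`: then `∑ g j * L θ j` would be negative
  obtain ⟨u, hu, hsu⟩ := hs (filter_subset (fun j ↦ g j ≤ 0) s)
  obtain ⟨θ, hθ⟩ := h𝒜 u hu
  have hsign : ∀ j ∈ s, (g j ≤ 0 ↔ 0 ≤ L θ j) := fun j hj ↦ by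
    have h := congrArg (j ∈ ·) hsu
    simp only [mem_inter, mem_filter, hj, true_and, hθ, eq_iff_iff] at h
    exact h.symm
  have hneg : ∑ j ∈ s, g j * L θ j < ∑ j ∈ s, (0 : ℝ) := by
    refine sum_lt_sum (fun j hj ↦ ?_) ⟨j₀, hj₀, ?_⟩
    · by_cases hgj : g j ≤ 0
      · exact mul_nonpos_of_nonpos_of_nonneg hgj ((hsign j hj).mp hgj)
      · exact (mul_neg_of_pos_of_neg (not_le.mp hgj) (not_le.mp
          fun h ↦ hgj ((hsign j hj).mpr h))).le
    · exact mul_neg_of_pos_of_neg hgj₀ (not_le.mp fun h ↦ hgj₀.not_ge ((hsign j₀ hj₀).mpr h))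
  simp [hg θ] at hneg

lemma card_le_sum_choose_finrank [Fintype ι] (L : E →ₗ[ℝ] ι → ℝ) {𝒜 : Finset (Finset ι)}
    (h𝒜 : ∀ u ∈ 𝒜, ∃ θ, ∀ j, j ∈ u ↔ 0 ≤ L θ j) :
    #𝒜 ≤ ∑ k ∈ Iic (Module.finrank ℝ E), (Fintype.card ι).choose k := by
  have hvc : 𝒜.vcDim ≤ Module.finrank ℝ E :=
    Finset.sup_le fun s hs ↦ card_le_finrank_of_shatters L h𝒜 (mem_shatterer.mp hs)
  calc #𝒜 ≤ #𝒜.shatterer := card_le_card_shatterer 𝒜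
    _ ≤ ∑ k ∈ Iic 𝒜.vcDim, (Fintype.card ι).choose k := card_shatterer_le_sum_vcDim
    _ ≤ ∑ k ∈ Iic (Module.finrank ℝ E), (Fintype.card ι).choose k :=
        sum_le_sum_of_subset (Iic_subset_Iic.mpr hvc)

end VCDimension

section Core

variable {n : ℕ} (w : Finset (Fin n) → ℝ)

def CoreConstraint (θ : (Fin n → ℝ) × ℝ × ℝ) (S : Finset (Fin n)) : Prop :=
  ∑ i ∈ S, θ.1 i + θ.2.1 + θ.2.2 ≥ w S

-- The paper's classifier `(π, 1, π₀, ε) · (χ_S, -w(S), 1, 1)`, with `π₀ + ε` merged into `c`.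
def coreMargin {ι : Type*} (q : ι → Finset (Fin n)) : (Fin n → ℝ) × ℝ × ℝ →ₗ[ℝ] ι → ℝ where
  toFun θ j := ∑ i ∈ q j, θ.1 i + θ.2.1 - θ.2.2 * w (q j)
  map_add' θ η := by
    funext j
    simp only [Prod.fst_add, Prod.snd_add, Pi.add_apply, sum_add_distrib]
    ring
  map_smul' c θ := by
    funext j
    simp only [Prod.smul_fst, Prod.smul_snd, Pi.smul_apply, smul_eq_mul, ← mul_sum,
      RingHom.id_apply]
    ring

lemma card_traces_coreConstraint_le {ι : Type*} [Fintype ι] (q : ι → Finset (Fin n)) :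
    #(traces (CoreConstraint w) q) ≤ ∑ k ∈ Iic (n + 2), (Fintype.card ι).choose k := by
  have hrank : Module.finrank ℝ ((Fin n → ℝ) × ℝ × ℝ) = n + 2 := by simp
  rw [← hrank]
  refine card_le_sum_choose_finrank (coreMargin w q) fun u hu ↦ ?_
  obtain ⟨θ, hθ⟩ := (mem_filter.mp hu).2
  refine ⟨(θ.1, θ.2.1 + θ.2.2, 1), fun j ↦ ?_⟩
  rw [hθ j]
  simp only [CoreConstraint, coreMargin, LinearMap.coe_mk, AddHom.coe_mk, one_mul, ge_iff_le]
  constructor <;> intro h <;> linarith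

end Core

lemma sum_choose_le_exp (N D : ℕ) {x : ℝ} (hx0 : 0 < x) (hx1 : x ≤ 1) :
    ∑ k ∈ Iic D, (N.choose k : ℝ) ≤ Real.exp (x * N + D / x) := by
  have hbinom : ∑ k ∈ Iic D, (N.choose k : ℝ) * x ^ k ≤ (1 + x) ^ N := by
    rw [add_comm, add_pow]
    calc ∑ k ∈ Iic D, (N.choose k : ℝ) * x ^ k
        ≤ ∑ k ∈ range (N + 1) ∪ Iic D, (N.choose k : ℝ) * x ^ k :=
          sum_le_sum_of_subset_of_nonneg subset_union_right fun k _ _ ↦ by positivity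
      _ = ∑ k ∈ range (N + 1), (N.choose k : ℝ) * x ^ k := by
          refine (sum_subset subset_union_left fun k _ hk ↦ ?_).symm
          rw [Nat.choose_eq_zero_of_lt (by simpa using hk), Nat.cast_zero, zero_mul]
      _ = ∑ k ∈ range (N + 1), x ^ k * 1 ^ (N - k) * (N.choose k : ℝ) :=
          sum_congr rfl fun k _ ↦ by ring
  have hlow : (∑ k ∈ Iic D, (N.choose k : ℝ)) * x ^ D ≤ ∑ k ∈ Iic D, (N.choose k : ℝ) * x ^ k := by
    rw [sum_mul]
    exact sum_le_sum fun k hk ↦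
      mul_le_mul_of_nonneg_left (pow_le_pow_of_le_one hx0.le hx1 (mem_Iic.mp hk)) (by positivity)
  have hgrow : (1 + x) ^ N ≤ Real.exp (x * N) := by
    rw [mul_comm, Real.exp_nat_mul]
    gcongr
    linarith [Real.add_one_le_exp x]
  have hinv : 1 ≤ x ^ D * Real.exp (D / x) := by
    have : (1 / x) ^ D ≤ Real.exp (D / x) := by
      calc (1 / x) ^ D ≤ Real.exp (1 / x) ^ D := by
            gcongr
            linarith [Real.add_one_le_exp (1 / x)]
        _ = Real.exp (D / x) := by rw [← Real.exp_nat_mul, mul_one_div]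
    calc (1 : ℝ) = x ^ D * (1 / x) ^ D := by rw [← mul_pow, mul_one_div_cancel hx0.ne', one_pow]
      _ ≤ x ^ D * Real.exp (D / x) := by gcongr
  calc ∑ k ∈ Iic D, (N.choose k : ℝ)
      ≤ (∑ k ∈ Iic D, (N.choose k : ℝ)) * (x ^ D * Real.exp (D / x)) :=
        le_mul_of_one_le_right (sum_nonneg fun k _ ↦ by positivity) hinv
    _ = (∑ k ∈ Iic D, (N.choose k : ℝ)) * x ^ D * Real.exp (D / x) := by ring
    _ ≤ Real.exp (x * N) * Real.exp (D / x) := by gcongr; exact hlow.trans (hbinom.trans hgrow)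
    _ = Real.exp (x * N + D / x) := (Real.exp_add _ _).symm

lemma two_mul_sum_choose_div_le {n m : ℕ} {δ Δ : ℝ} (hn : 1 ≤ n) (hδ0 : 0 < δ) (hδ1 : δ < 1)
    (hΔ0 : 0 < Δ) (hΔ1 : Δ < 1) (hm : 1000 * (n + Real.log (1 / Δ)) ≤ δ ^ 2 * m) :
    2 * ((∑ k ∈ Iic (n + 2), ((m + m).choose k : ℝ)) / 2 ^ ⌈δ * m / 2⌉₊) ≤ Δ := by
  set r := ⌈δ * m / 2⌉₊
  set L := Real.log (1 / Δ)
  have hL : 0 < L := Real.log_pos (by rw [one_div]; exact one_lt_inv_iff₀.mpr ⟨hΔ0, hΔ1⟩)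
  have hr : δ * m / 2 ≤ r := Nat.le_ceil _
  have hl2 : 0.69 < Real.log 2 := by linarith [Real.log_two_gt_d9]
  have hl2' : Real.log 2 < 0.7 := by linarith [Real.log_two_lt_d9]
  have hnR : (1 : ℝ) ≤ n := by exact_mod_cast hn
  set A := δ / 8 * ((m + m : ℕ) : ℝ) + ((n + 2 : ℕ) : ℝ) / (δ / 8)
  have hS := sum_choose_le_exp (m + m) (n + 2) (x := δ / 8) (by positivity) (by linarith)
  have hA : δ * (A + Real.log 2 + L) ≤ δ * (r * Real.log 2) := by
    have e : δ * A = δ ^ 2 * m / 4 + 8 * (n + 2) := by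
      simp only [A]; push_cast; field_simp; ring
    have hrl : δ * (δ * m / 2) * 0.69 ≤ δ * (r * Real.log 2) := by
      have := mul_le_mul hr hl2.le (by norm_num) (Nat.cast_nonneg r)
      nlinarith
    have hδl2 : δ * Real.log 2 ≤ 1 := by nlinarith
    have hδL : δ * L ≤ L := by nlinarith
    nlinarith
  have hA' := le_of_mul_le_mul_left hA hδ0
  calc 2 * ((∑ k ∈ Iic (n + 2), ((m + m).choose k : ℝ)) / 2 ^ r)
      ≤ 2 * (Real.exp A / 2 ^ r) := by gcongr
    _ = Real.exp (A + Real.log 2 - r * Real.log 2) := by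
        rw [Real.exp_sub, Real.exp_add A, Real.exp_nat_mul, Real.exp_log two_pos]
        ring
    _ ≤ Real.exp (-L) := Real.exp_le_exp.mpr (by linarith)
    _ = Δ := by rw [show -L = Real.log Δ by simp [L], Real.exp_log hΔ0]

end ProbableCore

end

open ProbableCore in
/-- There is a universal constant C such that for any game (N, w),
any distribution P over nonempty coalitions, and m ≥ C(n + log(1/Δ))/δ² i.i.d.
sampled coalitions, with probability ≥ 1 − Δ over the samples: any feasible
solution (π̂, π̂₀, ε̂) of the sampled quadratic program (nonnegative, budget
balanced, satisfying the sampled ε-core constraints) lies in the δ-probable core,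
i.e. Pr_{S∼P}[Σ_{i∈S} π̂ᵢ + π̂₀ + ε̂ ≥ w(S)] ≥ 1 − δ. -/
theorem stmt8 :
    ∃ C : ℝ, 0 < C ∧
      ∀ (n : ℕ) (w : Finset (Fin n) → ℝ) (hw0 : w ∅ = 0)
        (P : Finset (Fin n) → ℝ),
        (∀ S, 0 ≤ P S) → (∑ S, P S) = 1 → P ∅ = 0 →
        ∀ (δ Δ : ℝ), 0 < δ → δ < 1 → 0 < Δ → Δ < 1 →
        ∀ m : ℕ, C * ((n : ℝ) + Real.log (1 / Δ)) / δ ^ 2 ≤ (m : ℝ) →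
        -- (π̂, π̂₀, ε̂) is the (sample-dependent) solution of the sampled program
        ∀ (πh : (Fin m → Finset (Fin n)) → Fin n → ℝ)
          (π0h εh : (Fin m → Finset (Fin n)) → ℝ),
          (∀ xs, (∀ i, 0 ≤ πh xs i) ∧ 0 ≤ π0h xs ∧ 0 ≤ εh xs ∧
            (∑ i, πh xs i) + π0h xs = w Finset.univ) →
          -- probability (under m i.i.d. draws from P) of the event:
          -- "feasibility on all sampled coalitions implies δ-probable core"
          (∑ xs ∈ Finset.univ.filter
              (fun xs : Fin m → Finset (Fin n) =>
                (∀ k : Fin m,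
                    (∑ i ∈ xs k, πh xs i) + π0h xs + εh xs ≥ w (xs k)) →
                (∑ S ∈ Finset.univ.filter
                    (fun S : Finset (Fin n) =>
                      (∑ i ∈ S, πh xs i) + π0h xs + εh xs ≥ w S), P S)
                  ≥ 1 - δ),
            ∏ k : Fin m, P (xs k)) ≥ 1 - Δ := by
  refine ⟨1000, by norm_num, ?_⟩
  intro n w _ P hP hP1 hP0 δ Δ hδ0 hδ1 hΔ0 hΔ1 m hm πh π0h εh _
  have hn : 1 ≤ n := by
    rcases n with _ | n
    · rw [Fintype.sum_subsingleton _ ∅, hP0] at hP1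
      exact absurd hP1 zero_ne_one
    · omega
  have hL : 0 < Real.log (1 / Δ) :=
    Real.log_pos (by rw [one_div]; exact one_lt_inv_iff₀.mpr ⟨hΔ0, hΔ1⟩)
  have hm' : 1000 * (n + Real.log (1 / Δ)) ≤ δ ^ 2 * m := by
    rw [div_le_iff₀ (by positivity)] at hm
    linarith
  have h8 : 8 ≤ δ * m := by
    have : δ ^ 2 * m ≤ δ * m := by gcongr; nlinarith
    have : (1 : ℝ) ≤ n := by exact_mod_cast hn
    linarith
  have hG : ∀ q : Fin m ⊕ Fin m → Finset (Fin n),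
      (#(traces (CoreConstraint w) q) : ℝ) ≤ ∑ k ∈ Iic (n + 2), ((m + m).choose k : ℝ) := by
    intro q
    have := card_traces_coreConstraint_le w q
    rw [Fintype.card_sum, Fintype.card_fin] at this
    exact_mod_cast this
  have hpac := pac_guarantee hP hP1 hG h8 (Nat.ceil_lt_add_one (by positivity)).le
    fun xs ↦ (πh xs, π0h xs, εh xs)
  have hnum := two_mul_sum_choose_div_le hn hδ0 hδ1 hΔ0 hΔ1 hm'
  exact le_trans (by linarith) hpac
end

section
/- Let w : 2^N → ℝ be submodular with w(∅)=0. Then the VCG surplus vector with πᵢ^{VCG} = w(N) − w(N\{i}) and π₀^{VCG} = w(N) − Σᵢ πᵢ^{VCG} satisfies every core constraint: for all S ⊆ N, Σ_{i∈S} πᵢ^{VCG} + π₀^{VCG} ≥ w(S). Hence for submodular games, the VCG surplus vector lies in the core (ε = 0 suffices in the strong ε-core relaxation). -/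
/-- Submodularity (concavity): marginal contributions are decreasing. -/
def Submodular (n : ℕ) (w : Finset (Fin n) → ℝ) : Prop :=
  ∀ (S T : Finset (Fin n)) (i : Fin n), S ⊆ T → i ∉ T →
    w (insert i T) - w T ≤ w (insert i S) - w S

lemma key (n : ℕ) (w : Finset (Fin n) → ℝ) (hsub : Submodular n w) :
    ∀ T : Finset (Fin n),
      ∑ i ∈ T, (w Finset.univ - w (Finset.univ.erase i)) ≤ w Finset.univ - w Tᶜ := by
  intro T
  induction T using Finset.induction with
  | empty => simp
  | @insert a T ha ih =>
    rw [Finset.sum_insert ha]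
    have haT : a ∈ Tᶜ := by simp [ha]
    have hins : Tᶜ = insert a (insert a T)ᶜ := by
      ext x
      by_cases hx : x = a <;> simp [hx, haT, Finset.mem_insert]
    have hsubs : (insert a T)ᶜ ⊆ Finset.univ.erase a := by
      intro x hx
      simp only [Finset.compl_insert, Finset.mem_erase] at hx ⊢
      exact ⟨hx.1, Finset.mem_univ x⟩
    have hna : a ∉ Finset.univ.erase a := by simp
    have h1 := hsub ((insert a T)ᶜ) (Finset.univ.erase a) a hsubs hna
    rw [Finset.insert_erase (Finset.mem_univ a)] at h1
    rw [← hins] at h1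
    linarith

/-- For a submodular game with w(∅) = 0, the VCG surplus vector
satisfies every core constraint: Σ_{i∈S} πᵢ^{VCG} + π₀^{VCG} ≥ w(S) for all S. -/
theorem stmt15 (n : ℕ) (w : Finset (Fin n) → ℝ) (h0 : w ∅ = 0)
    (hsub : Submodular n w)
    (πVCG : Fin n → ℝ)
    (hπVCG : ∀ i, πVCG i = w Finset.univ - w (Finset.univ.erase i))
    (π₀VCG : ℝ)
    (hπ₀VCG : π₀VCG = w Finset.univ - ∑ i, πVCG i) :
    ∀ S : Finset (Fin n), (∑ i ∈ S, πVCG i) + π₀VCG ≥ w S := by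
  intro S
  have hsplit : (∑ i, πVCG i) = (∑ i ∈ S, πVCG i) + ∑ i ∈ Sᶜ, πVCG i :=
    (Finset.sum_add_sum_compl S πVCG).symm
  have hk := key n w hsub Sᶜ
  rw [compl_compl] at hk
  have : ∑ i ∈ Sᶜ, πVCG i ≤ w Finset.univ - w S := by
    calc ∑ i ∈ Sᶜ, πVCG i
        = ∑ i ∈ Sᶜ, (w Finset.univ - w (Finset.univ.erase i)) := by
          exact Finset.sum_congr rfl fun i _ => hπVCG i
      _ ≤ w Finset.univ - w S := hk
  rw [hπ₀VCG, hsplit]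
  linarith
end
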